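/- Let Σ be an n × n positive definite real matrix, and for T ⊆ {1,...,n} let Σ_T be the principal submatrix indexed by T. Then T ↦ log det(Σ_T) (with log det(Σ_∅) = 0) is a submodular set function. -/

import Mathlib

/-! Adding `i ∉ T` multiplies `det Σ_T` by the Schur complement `Σ_ii - cᵀ Σ_T⁻¹ c`, where
`c = (Σ_ji)_{j ∈ T}`, so the increment of `log det` at `T` is the logarithm of that Schur
complement. For positive definite `Σ_T` one has `cᵀ Σ_T⁻¹ c = max_x (2 xᵀ c - xᵀ Σ_T x)`;
extending vectors by zero shows that this maximum can only grow with `T`, so the Schur complement,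
and with it the increment, decreases as `T` grows. -/

open Matrix

namespace Matrix

theorem PosDef.isGreatest_two_mul_dotProduct_sub_dotProduct_mulVec {κ : Type*} [Fintype κ]
    [DecidableEq κ] {A : Matrix κ κ ℝ} (hA : A.PosDef) (c : κ → ℝ) :
    IsGreatest (Set.range fun x => 2 * (x ⬝ᵥ c) - x ⬝ᵥ (A *ᵥ x)) (c ⬝ᵥ (A⁻¹ *ᵥ c)) := by
  set y := A⁻¹ *ᵥ c
  have hy : A *ᵥ y = c := by
    rw [mulVec_mulVec, mul_nonsing_inv _ hA.det_pos.ne'.isUnit, one_mulVec]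
  have hyc : c ⬝ᵥ y = y ⬝ᵥ c := dotProduct_comm _ _
  refine ⟨⟨y, by dsimp only; rw [hy, hyc]; ring⟩, ?_⟩
  rintro _ ⟨x, rfl⟩
  dsimp only
  have hsymm : x ⬝ᵥ (A *ᵥ y) = y ⬝ᵥ (A *ᵥ x) := by
    rw [dotProduct_mulVec, ← mulVec_transpose, dotProduct_comm,
      ← conjTranspose_eq_transpose_of_trivial, hA.isHermitian.eq]
  have hnonneg := hA.posSemidef.dotProduct_mulVec_nonneg (x - y)
  simp only [star_trivial, mulVec_sub, sub_dotProduct, dotProduct_sub, hy] at hnonneg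
  rw [← hsymm, hy] at hnonneg
  linarith

variable {ι : Type*}

abbrev principalSubmatrix (M : Matrix ι ι ℝ) (T : Finset ι) : Matrix T T ℝ :=
  M.submatrix (fun j : T => (j : ι)) (fun j : T => (j : ι))

theorem PosDef.principalSubmatrix {M : Matrix ι ι ℝ} (hM : M.PosDef) (T : Finset ι) :
    (M.principalSubmatrix T).PosDef :=
  hM.submatrix Subtype.val_injective

theorem dotProduct_subtype_of_support_subset [Fintype ι] {T : Finset ι} {g : ι → ℝ}
    (hg : Function.support g ⊆ T) (v : ι → ℝ) :
    (fun j : T => g j) ⬝ᵥ (fun j : T => v j) = g ⬝ᵥ v := by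
  rw [dotProduct, dotProduct, Finset.sum_coe_sort T (fun a => g a * v a)]
  exact Fintype.sum_subset fun a ha => hg (left_ne_zero_of_mul ha)

theorem principalSubmatrix_mulVec_of_support_subset [Fintype ι] (M : Matrix ι ι ℝ)
    {T : Finset ι} {g : ι → ℝ} (hg : Function.support g ⊆ T) :
    M.principalSubmatrix T *ᵥ (fun j : T => g j) = fun j : T => (M *ᵥ g) j := by
  funext j
  rw [mulVec, dotProduct_comm]
  exact (dotProduct_subtype_of_support_subset hg (M j)).trans (dotProduct_comm _ _)

variable [DecidableEq ι]

noncomputable def principalSchurCompl (M : Matrix ι ι ℝ) (T : Finset ι) (i : ι) : ℝ :=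
  M i i - (fun j : T => M i j) ⬝ᵥ ((M.principalSubmatrix T)⁻¹ *ᵥ fun j : T => M j i)

theorem det_principalSubmatrix_insert {M : Matrix ι ι ℝ} {T : Finset ι} {i : ι}
    (hT : IsUnit (M.principalSubmatrix T).det) (hi : i ∉ T) :
    (M.principalSubmatrix (insert i T)).det =
      (M.principalSubmatrix T).det * M.principalSchurCompl T i := by
  have := (M.principalSubmatrix T).invertibleOfIsUnitDet hT
  let e : (T ⊕ PUnit.{1}) ≃ (insert i T : Finset ι) :=
    ((Finset.subtypeInsertEquivOption hi).trans (Equiv.optionEquivSumPUnit _)).symm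
  have hblock : (M.principalSubmatrix (insert i T)).submatrix e e =
      fromBlocks (M.principalSubmatrix T) (of fun (j : T) (_ : PUnit) => M j i)
        (of fun (_ : PUnit) (k : T) => M i k) (of fun _ _ => M i i) := by
    ext (j | _) (k | _) <;> rfl
  rw [← det_submatrix_equiv_self e, hblock, det_fromBlocks₁₁, invOf_eq_nonsing_inv,
    det_unique (_ : Matrix PUnit PUnit ℝ), principalSchurCompl, dotProduct_mulVec]
  rfl

variable {M : Matrix ι ι ℝ}

theorem PosDef.principalSchurCompl_eq (hM : M.PosDef) (T : Finset ι) (i : ι) :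
    M.principalSchurCompl T i =
      M i i - (fun j : T => M j i) ⬝ᵥ ((M.principalSubmatrix T)⁻¹ *ᵥ fun j : T => M j i) := by
  have hrow : (fun j : T => M i j) = fun j : T => M j i :=
    funext fun j => by simpa using (hM.isHermitian.apply i j).symm
  rw [principalSchurCompl, hrow]

theorem PosDef.antitone_principalSchurCompl [Fintype ι] (hM : M.PosDef) (i : ι) :
    Antitone fun T => M.principalSchurCompl T i := by
  intro A B hAB
  simp only [hM.principalSchurCompl_eq]
  obtain ⟨y, hy⟩ :=
    ((hM.principalSubmatrix A).isGreatest_two_mul_dotProduct_sub_dotProduct_mulVec (M · i)).1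
  let g : ι → ℝ := fun a => if h : a ∈ A then y ⟨a, h⟩ else 0
  have hgA : Function.support g ⊆ A := fun a ha => by
    by_contra h
    exact ha (dif_neg h)
  have hgB : Function.support g ⊆ B := hgA.trans (Finset.coe_subset.mpr hAB)
  have hyg : y = fun j : A => g j := funext fun j => by simp [g]
  have hB := ((hM.principalSubmatrix B).isGreatest_two_mul_dotProduct_sub_dotProduct_mulVec
    (M · i)).2 ⟨fun j : B => g j, rfl⟩
  dsimp only at hy hB
  rw [hyg, principalSubmatrix_mulVec_of_support_subset M hgA,
    dotProduct_subtype_of_support_subset hgA,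
    dotProduct_subtype_of_support_subset hgA (M · i)] at hy
  rw [principalSubmatrix_mulVec_of_support_subset M hgB,
    dotProduct_subtype_of_support_subset hgB,
    dotProduct_subtype_of_support_subset hgB (M · i)] at hB
  linarith

theorem PosDef.principalSchurCompl_pos (hM : M.PosDef) {T : Finset ι} {i : ι} (hi : i ∉ T) :
    0 < M.principalSchurCompl T i := by
  have hT := (hM.principalSubmatrix T).det_pos
  have hiT := (hM.principalSubmatrix (insert i T)).det_pos
  rw [det_principalSubmatrix_insert hT.ne'.isUnit hi] at hiT
  exact pos_of_mul_pos_right hiT hT.le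

theorem PosDef.log_det_principalSubmatrix_insert_sub (hM : M.PosDef) {T : Finset ι} {i : ι}
    (hi : i ∉ T) :
    Real.log (M.principalSubmatrix (insert i T)).det - Real.log (M.principalSubmatrix T).det =
      Real.log (M.principalSchurCompl T i) := by
  have hT := (hM.principalSubmatrix T).det_pos
  rw [det_principalSubmatrix_insert hT.ne'.isUnit hi,
    Real.log_mul hT.ne' (hM.principalSchurCompl_pos hi).ne']
  ring

theorem PosDef.log_det_principalSubmatrix_insert_sub_le [Fintype ι] (hM : M.PosDef)
    {A B : Finset ι} (hAB : A ⊆ B) {i : ι} (hi : i ∉ B) :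
    Real.log (M.principalSubmatrix (insert i B)).det - Real.log (M.principalSubmatrix B).det ≤
      Real.log (M.principalSubmatrix (insert i A)).det - Real.log (M.principalSubmatrix A).det := by
  rw [hM.log_det_principalSubmatrix_insert_sub hi,
    hM.log_det_principalSubmatrix_insert_sub fun h => hi (hAB h)]
  exact Real.log_le_log (hM.principalSchurCompl_pos hi) (hM.antitone_principalSchurCompl i hAB)

end Matrix

/-- For a positive definite matrix `Sig`, the map `T ↦ log det (Sig_T)` on
principal submatrices is submodular (with value `0` on the empty set). -/
theorem stmt_12 {n : ℕ} (Sig : Matrix (Fin n) (Fin n) ℝ) (hSig : Sig.PosDef)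
    (φ : Finset (Fin n) → ℝ)
    (hφ : ∀ T : Finset (Fin n),
      φ T = Real.log ((Sig.submatrix
        (fun j : T => (j : Fin n)) (fun j : T => (j : Fin n))).det)) :
    φ ∅ = 0 ∧
    ∀ (A B : Finset (Fin n)) (i : Fin n), A ⊆ B → i ∉ B →
      φ (insert i B) - φ B ≤ φ (insert i A) - φ A := by
  refine ⟨by rw [hφ, det_isEmpty, Real.log_one], fun A B i hAB hi => ?_⟩
  simpa only [hφ] using hSig.log_det_principalSubmatrix_insert_sub_le hAB hi
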